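/- arXiv:1905.04755 — 4 statements merged into one kernel-verified Lean document; each statement's English description precedes it below -/
import Mathlib

section
/- For any Boolean function f : (V → Bool) → Bool and variable v ∈ V, substituting for v the function f with v set to true yields the existential quantification of v: for every assignment μ, f(μ[v := f(μ[v := true])]) = f(μ[v := false]) ∨ f(μ[v := true]). -/
/-- Quantifier elimination by composition (Jiang): substituting for `v` the
function `f` with `v` set to `true` yields the existential quantification. -/
theorem exists_elim_by_composition {V : Type*} [DecidableEq V]
    (f : (V → Bool) → Bool) (v : V) :
    ∀ μ : V → Bool,
      f (Function.update μ v (f (Function.update μ v true))) =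
        (f (Function.update μ v false) || f (Function.update μ v true)) := by
  intro μ
  cases h : f (Function.update μ v true) with
  | true => simp [h]
  | false => simp [h]
end

section
/- There is no constant c ∈ Bool such that for all x₁, x₂ : Bool, (x₁ ↔ x₂) ∨ (x₁ ≠ c) holds. Consequently, the formula ∀x₁ : ((∀x₂ : x₁ ≡ x₂) ∨ (∃y₁(∅) : x₁ ≢ y₁)) is unsatisfiable, while ∀x₁∀x₂∃y₁(x₂) : ((x₁ ≡ x₂) ∨ (x₁ ≢ y₁)) is satisfiable (witness s(x₂) = x₂); hence these two formulas are not equisatisfiable. -/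
/-- Counterexample refuting Proposition 4 of Balabanov et al.: with the
dependency set of `y₁` restricted to `∅` the formula is unsatisfiable,
while with dependency set `{x₂}` it is satisfiable. -/
theorem prop4_counterexample :
    (¬ ∃ c : Bool, ∀ x₁ x₂ : Bool, ((x₁ == x₂) || (x₁ != c)) = true) ∧
    (∃ s : Bool → Bool, ∀ x₁ x₂ : Bool, ((x₁ == x₂) || (x₁ != s x₂)) = true) := by
  constructor
  · rintro ⟨c, h⟩
    rcases c with _ | _
    · exact absurd (h false true) (by decide)
    · exact absurd (h true false) (by decide)
  · exact ⟨id, by decide⟩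
end

section
/- There exist functions s₁, s₂ : Bool × Bool → Bool such that for all x₁, x₂ : Bool, (s₁(x₁,x₂) ↔ ¬ s₂(x₁,x₂)) ∧ (s₂(x₁,x₂) ↔ (x₁ ∧ x₂)) holds (e.g., s₁ = ¬(x₁∧x₂), s₂ = x₁∧x₂); but there is no constant c ∈ Bool and no function s₂ : Bool × Bool → Bool such that for all x₁, x₂, (c ↔ ¬ s₂(x₁,x₂)) ∧ (s₂(x₁,x₂) ↔ (x₁ ∧ x₂)) holds. -/
/-- Counterexample refuting Proposition 5 of Balabanov et al. -/
theorem prop5_counterexample :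
    (∃ s₁ s₂ : Bool × Bool → Bool, ∀ x₁ x₂ : Bool,
        ((s₁ (x₁, x₂) == !s₂ (x₁, x₂)) && (s₂ (x₁, x₂) == (x₁ && x₂))) = true) ∧
    (¬ ∃ (c : Bool) (s₂ : Bool × Bool → Bool), ∀ x₁ x₂ : Bool,
        ((c == !s₂ (x₁, x₂)) && (s₂ (x₁, x₂) == (x₁ && x₂))) = true) := by
  constructor
  · exact ⟨fun p => !(p.1 && p.2), fun p => p.1 && p.2, by decide⟩
  · rintro ⟨c, s₂, h⟩
    have h1 := h true true
    have h2 := h false false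
    simp at h1 h2
    rw [h1.2] at h1; rw [h2.2] at h2
    simp [h2.1] at h1
end

section
/- Let V₁, V₂ be disjoint finite variable sets, f₁ over V₁ and f₂ over V₂, and y a variable not in V₁ ∪ V₂. Consider g(μ, b) := f₁(μ|V₁, b) ∨ f₂(μ|V₂, b) where fᵢ additionally reads the Boolean b (the value of y). Then there exists a constant c with ∀ μ, g(μ, c) = true if and only if there exist constants c₁, c₂ with (∀ μ₁ : V₁ → Bool, f₁(μ₁, c₁) = true) ∨ (∀ μ₂ : V₂ → Bool, f₂(μ₂, c₂) = true). -/
/-- Propositional core of rule (5h) for DQBF with empty dependency set: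
the existential quantifier distributes over a disjunction whose disjuncts
range over disjoint universal variable sets. -/
theorem exists_or_distrib_disjoint {V : Type*}
    (V₁ V₂ : Set V) (hdisj : Disjoint V₁ V₂)
    (f₁ : (V₁ → Bool) → Bool → Bool) (f₂ : (V₂ → Bool) → Bool → Bool) :
    (∃ c : Bool, ∀ μ : V → Bool,
        (f₁ (fun v => μ v.1) c || f₂ (fun v => μ v.1) c) = true) ↔
    (∃ c₁ c₂ : Bool,
        (∀ μ₁ : V₁ → Bool, f₁ μ₁ c₁ = true) ∨
        (∀ μ₂ : V₂ → Bool, f₂ μ₂ c₂ = true)) := by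
  constructor
  · rintro ⟨c, hc⟩
    refine ⟨c, c, ?_⟩
    classical
    by_contra h
    push_neg at h
    obtain ⟨⟨μ₁, h1⟩, ⟨μ₂, h2⟩⟩ := h
    set μ : V → Bool := fun v =>
      if h : v ∈ V₁ then μ₁ ⟨v, h⟩ else if h2 : v ∈ V₂ then μ₂ ⟨v, h2⟩ else false with hμ
    have e1 : (fun v : V₁ => μ v.1) = μ₁ := by
      funext v; simp [hμ, v.2]
    have e2 : (fun v : V₂ => μ v.1) = μ₂ := by
      funext v
      have hn : v.1 ∉ V₁ := fun hv => hdisj.ne_of_mem hv v.2 rfl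
      simp [hμ, hn, v.2]
    have := hc μ
    rw [e1, e2] at this
    simp [h1, h2] at this
  · rintro ⟨c₁, c₂, h | h⟩
    · exact ⟨c₁, fun μ => by simp [h]⟩
    · exact ⟨c₂, fun μ => by simp [h]⟩
end
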